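/- Let φ_1, φ_2 ∈ Φ, let ε > 0, and let K, L ∈ 𝒦ⁿ. Then the function u ↦ b(K +_φ ε·L, u) is positive and continuous on the unit sphere S^{n−1}. -/

import Mathlib

open MeasureTheory Metric Filter Set
open scoped RealInnerProductSpace ENNReal

noncomputable section

abbrev Euc (n : ℕ) := EuclideanSpace ℝ (Fin n)

/-- Support function `h(K,x) = sup {⟨x,y⟩ : y ∈ K}`. -/
def suppFn {n : ℕ} (K : Set (Euc n)) (x : Euc n) : ℝ :=
  sSup ((fun y => ⟪x, y⟫) '' K)

/-- Half width of `K` in direction `u`: `b(K,u) = (h(K,u)+h(K,-u))/2`. -/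
def halfWidth {n : ℕ} (K : Set (Euc n)) (u : Euc n) : ℝ :=
  (suppFn K u + suppFn K (-u)) / 2

/-- A convex body containing the origin in its interior. -/
def IsConvexBody {n : ℕ} (K : Set (Euc n)) : Prop :=
  IsCompact K ∧ Convex ℝ K ∧ (0 : Euc n) ∈ interior K

/-- Spherical Lebesgue measure on the unit sphere. -/
def sphMeasure (n : ℕ) : Measure (sphere (0 : Euc n) 1) :=
  (volume : Measure (Euc n)).toSphere

/-- Width integral `A_i(K) = (1/n) ∫_{S^{n-1}} b(K,u)^{n-i} dS(u)`. -/
def widthIntegral (n i : ℕ) (K : Set (Euc n)) : ℝ :=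
  (1 / (n : ℝ)) * ∫ u : sphere (0 : Euc n) 1,
    halfWidth K (u : Euc n) ^ ((n : ℝ) - i) ∂(sphMeasure n)

/-- `K` and `L` have similar width: `b(L,·) = λ b(K,·)` on the sphere for some `λ > 0`. -/
def SimilarWidth {n : ℕ} (K L : Set (Euc n)) : Prop :=
  ∃ lam : ℝ, 0 < lam ∧ ∀ u : Euc n, ‖u‖ = 1 → halfWidth L u = lam * halfWidth K u

/-- The class `Φ`: convex, strictly decreasing `φ : (0,∞) → (0,∞)` with
`φ(0⁺)=∞`, `φ(∞)=0`, `φ(1)=1`. -/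
structure IsOrliczPhi (φ : ℝ → ℝ) : Prop where
  convexOn : ConvexOn ℝ (Set.Ioi (0 : ℝ)) φ
  strictAntiOn : StrictAntiOn φ (Set.Ioi (0 : ℝ))
  pos : ∀ t : ℝ, 0 < t → 0 < φ t
  tendsto_zero : Filter.Tendsto φ (nhdsWithin 0 (Set.Ioi 0)) Filter.atTop
  tendsto_atTop : Filter.Tendsto φ Filter.atTop (nhds 0)
  one : φ 1 = 1

/-- Half-width function of the Orlicz width linear combination `K +_φ ε·L`,
given the half widths `bK = b(K,u)`, `bL = b(L,u)`:
`sup {λ > 0 : φ₁(bK/λ) + ε φ₂(bL/λ) ≤ 1}`. -/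
def orliczComb (φ₁ φ₂ : ℝ → ℝ) (ε bK bL : ℝ) : ℝ :=
  sSup {lam : ℝ | 0 < lam ∧ φ₁ (bK / lam) + ε * φ₂ (bL / lam) ≤ 1}


lemma suppFn_bddAbove {n : ℕ} {K : Set (Euc n)} {R : ℝ} (hR : ∀ z ∈ K, ‖z‖ ≤ R)
    (x : Euc n) : BddAbove ((fun y => (⟪x, y⟫ : ℝ)) '' K) := by
  refine ⟨‖x‖ * R, ?_⟩
  rintro a ⟨z, hz, rfl⟩
  calc (⟪x, z⟫ : ℝ) ≤ ‖x‖ * ‖z‖ := real_inner_le_norm x z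
    _ ≤ ‖x‖ * R := by
        have := hR z hz
        nlinarith [norm_nonneg x, norm_nonneg z]

lemma le_suppFn {n : ℕ} {K : Set (Euc n)} {R : ℝ} (hR : ∀ z ∈ K, ‖z‖ ≤ R)
    {z : Euc n} (hz : z ∈ K) (x : Euc n) : ⟪x, z⟫ ≤ suppFn K x :=
  le_csSup (suppFn_bddAbove hR x) ⟨z, hz, rfl⟩

lemma suppFn_sub_le {n : ℕ} {K : Set (Euc n)} (hne : K.Nonempty) {R : ℝ} (hR0 : 0 ≤ R)
    (hR : ∀ z ∈ K, ‖z‖ ≤ R) (x y : Euc n) :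
    suppFn K x ≤ suppFn K y + R * ‖x - y‖ := by
  refine csSup_le (hne.image _) ?_
  rintro a ⟨z, hz, rfl⟩
  have h1 : (⟪x, z⟫ : ℝ) = ⟪y, z⟫ + ⟪x - y, z⟫ := by rw [inner_sub_left]; ring
  have h2 : (⟪x - y, z⟫ : ℝ) ≤ ‖x - y‖ * ‖z‖ := real_inner_le_norm _ _
  have h3 : ‖x - y‖ * ‖z‖ ≤ ‖x - y‖ * R := by
    have := hR z hz; nlinarith [norm_nonneg (x - y), norm_nonneg z]
  have h4 : (⟪y, z⟫ : ℝ) ≤ suppFn K y := le_suppFn hR hz y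
  calc (⟪x, z⟫ : ℝ) ≤ suppFn K y + ‖x - y‖ * R := by rw [h1]; linarith
    _ = suppFn K y + R * ‖x - y‖ := by ring

lemma continuous_suppFn {n : ℕ} {K : Set (Euc n)} (hKc : IsCompact K) (hne : K.Nonempty) :
    Continuous (suppFn K) := by
  obtain ⟨R, hR⟩ := hKc.isBounded.exists_norm_le
  have hR0 : 0 ≤ R := le_trans (norm_nonneg _) (hR _ hne.choose_spec)
  refine LipschitzWith.continuous (K := ⟨R, hR0⟩) (LipschitzWith.of_dist_le_mul fun x y => ?_)
  rw [Real.dist_eq, abs_sub_le_iff]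
  constructor
  · have := suppFn_sub_le hne hR0 hR x y
    rw [dist_eq_norm]; push_cast; exact (by linarith : suppFn K x - suppFn K y ≤ R * ‖x - y‖)
  · have := suppFn_sub_le hne hR0 hR y x
    rw [dist_eq_norm]
    rw [norm_sub_rev y x] at this
    push_cast; exact (by linarith : suppFn K y - suppFn K x ≤ R * ‖x - y‖)

lemma continuous_halfWidth {n : ℕ} {K : Set (Euc n)} (hKc : IsCompact K) (hne : K.Nonempty) :
    Continuous (halfWidth K) := by
  have h := continuous_suppFn hKc hne
  exact ((h.add (h.comp continuous_neg)).div_const 2)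

lemma halfWidth_pos {n : ℕ} {K : Set (Euc n)} (hKc : IsCompact K)
    (h0 : (0 : Euc n) ∈ interior K) {u : Euc n} (hu : ‖u‖ = 1) : 0 < halfWidth K u := by
  obtain ⟨R, hR⟩ := hKc.isBounded.exists_norm_le
  obtain ⟨r, hr, hball⟩ := Metric.mem_nhds_iff.mp (mem_interior_iff_mem_nhds.mp h0)
  have hmem : ∀ s : Euc n, ‖s‖ = 1 → (r/2) • s ∈ K := by
    intro s hs
    apply hball
    simp [Metric.mem_ball, hs, abs_of_pos hr]
    rw [norm_smul, hs]
    simp [abs_of_pos hr]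
    linarith
  have h1 : r/2 ≤ suppFn K u := by
    have := le_suppFn hR (hmem u hu) u
    rwa [real_inner_smul_right, real_inner_self_eq_norm_mul_norm, hu, one_mul, mul_one] at this
  have h2 : r/2 ≤ suppFn K (-u) := by
    have hmem' := hmem (-u) (by rw [norm_neg, hu])
    have := le_suppFn hR hmem' (-u)
    rwa [real_inner_smul_right, real_inner_self_eq_norm_mul_norm, norm_neg, hu, one_mul,
      mul_one] at this
  have : 0 < r/2 := by linarith
  unfold halfWidth; linarith

lemma IsOrliczPhi.continuousOn {φ : ℝ → ℝ} (hφ : IsOrliczPhi φ) :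
    ContinuousOn φ (Ioi 0) := hφ.convexOn.continuousOn isOpen_Ioi

section core
variable {φ₁ φ₂ : ℝ → ℝ} {ε : ℝ}

/-- The function `λ ↦ φ₁(b/λ) + ε φ₂(c/λ)` is strictly increasing on `(0,∞)`. -/
lemma orliczF_strictMono (hφ₁ : IsOrliczPhi φ₁) (hφ₂ : IsOrliczPhi φ₂) (hε : 0 < ε) {b c : ℝ} (hb : 0 < b) (hc : 0 < c) :
    StrictMonoOn (fun lam => φ₁ (b / lam) + ε * φ₂ (c / lam)) (Ioi (0:ℝ)) := by
  intro x hx y hy hxy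
  have hx' : (0:ℝ) < x := hx
  have hy' : (0:ℝ) < y := hy
  have h1 : b / y < b / x := by apply div_lt_div_of_pos_left hb hx' hxy
  have h2 : c / y < c / x := by apply div_lt_div_of_pos_left hc hx' hxy
  have p1 : φ₁ (b / x) < φ₁ (b / y) :=
    hφ₁.strictAntiOn (div_pos hb hy') (div_pos hb hx') h1
  have p2 : φ₂ (c / x) < φ₂ (c / y) :=
    hφ₂.strictAntiOn (div_pos hc hy') (div_pos hc hx') h2
  dsimp only
  nlinarith

lemma orliczF_continuousOn (hφ₁ : IsOrliczPhi φ₁) (hφ₂ : IsOrliczPhi φ₂) {b c : ℝ} (hb : 0 < b) (hc : 0 < c) :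
    ContinuousOn (fun lam => φ₁ (b / lam) + ε * φ₂ (c / lam)) (Ioi (0:ℝ)) := by
  have hmaps : ∀ d : ℝ, 0 < d → MapsTo (fun lam : ℝ => d / lam) (Ioi 0) (Ioi 0) :=
    fun d hd lam hlam => div_pos hd hlam
  have hdiv : ∀ d : ℝ, ContinuousOn (fun lam : ℝ => d / lam) (Ioi 0) :=
    fun d => continuousOn_const.div continuousOn_id (fun x hx => ne_of_gt hx)
  exact ((hφ₁.continuousOn.comp (hdiv b) (hmaps b hb)).add
    (continuousOn_const.mul (hφ₂.continuousOn.comp (hdiv c) (hmaps c hc))))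

/-- Existence of the root. -/
lemma orlicz_exists_root (hφ₁ : IsOrliczPhi φ₁) (hφ₂ : IsOrliczPhi φ₂) (hε : 0 < ε) {b c : ℝ} (hb : 0 < b) (hc : 0 < c) :
    ∃ lam : ℝ, 0 < lam ∧ φ₁ (b / lam) + ε * φ₂ (c / lam) = 1 := by
  set f : ℝ → ℝ := fun lam => φ₁ (b / lam) + ε * φ₂ (c / lam) with hf
  -- small λ with f λ < 1
  obtain ⟨T, hT⟩ := eventually_atTop.mp
    ((hφ₁.tendsto_atTop.eventually_lt_const (by norm_num : (0:ℝ) < 1/2)).and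
      (hφ₂.tendsto_atTop.eventually_lt_const (by positivity : (0:ℝ) < 1/(2*ε))))
  set T₀ : ℝ := max T 1 with hT₀
  have hT₀pos : (0:ℝ) < T₀ := lt_of_lt_of_le one_pos (le_max_right _ _)
  set lam₁ : ℝ := min (b / T₀) (c / T₀) with hlam₁
  have hlam₁pos : 0 < lam₁ := lt_min (div_pos hb hT₀pos) (div_pos hc hT₀pos)
  have hbig : ∀ d : ℝ, 0 < d → lam₁ ≤ d / T₀ → T₀ ≤ d / lam₁ := by
    intro d hd hle
    rw [le_div_iff₀ hlam₁pos]
    calc T₀ * lam₁ ≤ T₀ * (d / T₀) := by nlinarith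
      _ = d := by field_simp
  have hflam₁ : f lam₁ < 1 := by
    have h1 := (hT (b / lam₁) (le_trans (le_max_left _ _)
      (hbig b hb (min_le_left _ _)))).1
    have h2 := (hT (c / lam₁) (le_trans (le_max_left _ _)
      (hbig c hc (min_le_right _ _)))).2
    have : ε * φ₂ (c / lam₁) < ε * (1/(2*ε)) := by
      exact mul_lt_mul_of_pos_left h2 hε
    have heq : ε * (1/(2*ε)) = 1/2 := by field_simp
    rw [heq] at this
    simp only [hf]; linarith
  -- large λ with f λ > 1
  obtain ⟨t₀, hφt₀, ht₀mem⟩ :=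
    ((hφ₁.tendsto_zero.eventually_gt_atTop 1).and self_mem_nhdsWithin).exists
  have ht₀pos : (0:ℝ) < t₀ := ht₀mem
  set lam₂ : ℝ := b / t₀ with hlam₂
  have hlam₂pos : 0 < lam₂ := div_pos hb ht₀pos
  have hflam₂ : 1 < f lam₂ := by
    have hbt : b / lam₂ = t₀ := by field_simp [hlam₂]; rw [hlam₂, div_mul_cancel₀ b ht₀pos.ne']
    have hpos2 : 0 < φ₂ (c / lam₂) := hφ₂.pos _ (div_pos hc hlam₂pos)
    simp only [hf, hbt]
    nlinarith [hφt₀]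
  -- IVT
  have hle : lam₁ ≤ lam₂ := by
    by_contra hlt
    push_neg at hlt
    have := orliczF_strictMono hφ₁ hφ₂ hε hb hc hlam₂pos hlam₁pos hlt
    simp only [hf] at hflam₁ hflam₂
    simp only at this
    linarith
  have hcont : ContinuousOn f (Icc lam₁ lam₂) :=
    (orliczF_continuousOn hφ₁ hφ₂ hb hc).mono
      (fun x hx => lt_of_lt_of_le hlam₁pos hx.1)
  have hmem : (1:ℝ) ∈ Icc (f lam₁) (f lam₂) := ⟨le_of_lt hflam₁, le_of_lt hflam₂⟩
  obtain ⟨lam₀, hlam₀mem, hlam₀⟩ := intermediate_value_Icc hle hcont hmem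
  exact ⟨lam₀, lt_of_lt_of_le hlam₁pos hlam₀mem.1, hlam₀⟩

/-- Characterization: `orliczComb = root`. -/
lemma orliczComb_eq_root (hφ₁ : IsOrliczPhi φ₁) (hφ₂ : IsOrliczPhi φ₂) (hε : 0 < ε) {b c lam₀ : ℝ} (hb : 0 < b) (hc : 0 < c)
    (h0 : 0 < lam₀) (hroot : φ₁ (b / lam₀) + ε * φ₂ (c / lam₀) = 1) :
    orliczComb φ₁ φ₂ ε b c = lam₀ := by
  have hmono := orliczF_strictMono (φ₁ := φ₁) (φ₂ := φ₂) hφ₁ hφ₂ hε hb hc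
  have hset : {lam : ℝ | 0 < lam ∧ φ₁ (b / lam) + ε * φ₂ (c / lam) ≤ 1} = Ioc 0 lam₀ := by
    ext lam
    simp only [mem_setOf_eq, mem_Ioc]
    constructor
    · rintro ⟨hl, hle⟩
      refine ⟨hl, ?_⟩
      by_contra hgt
      push_neg at hgt
      have := hmono h0 hl hgt
      simp only at this
      rw [hroot] at this
      linarith
    · rintro ⟨hl, hle⟩
      refine ⟨hl, ?_⟩
      rcases eq_or_lt_of_le hle with rfl | hlt
      · exact le_of_eq hroot
      · have := hmono hl h0 hlt
        simp only at this
        rw [hroot] at this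
        linarith
  rw [orliczComb, hset, csSup_Ioc h0]

/-- Positivity. -/
lemma orliczComb_pos (hφ₁ : IsOrliczPhi φ₁) (hφ₂ : IsOrliczPhi φ₂) (hε : 0 < ε) {b c : ℝ} (hb : 0 < b) (hc : 0 < c) :
    0 < orliczComb φ₁ φ₂ ε b c := by
  obtain ⟨lam₀, h0, hroot⟩ := orlicz_exists_root hφ₁ hφ₂ hε hb hc
  rw [orliczComb_eq_root hφ₁ hφ₂ hε hb hc h0 hroot]; exact h0

/-- Continuity of `(b,c) ↦ orliczComb` on the open positive quadrant. -/
lemma orliczComb_continuousOn (hφ₁ : IsOrliczPhi φ₁) (hφ₂ : IsOrliczPhi φ₂) (hε : 0 < ε) :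
    ContinuousOn (fun p : ℝ × ℝ => orliczComb φ₁ φ₂ ε p.1 p.2)
      {p : ℝ × ℝ | 0 < p.1 ∧ 0 < p.2} := by
  set Q : Set (ℝ × ℝ) := {p : ℝ × ℝ | 0 < p.1 ∧ 0 < p.2} with hQ
  have hQopen : IsOpen Q :=
    (isOpen_lt continuous_const continuous_fst).inter (isOpen_lt continuous_const continuous_snd)
  set g : ℝ × ℝ → ℝ := fun p => orliczComb φ₁ φ₂ ε p.1 p.2 with hg
  intro p₀ hp₀
  apply ContinuousAt.continuousWithinAt
  obtain ⟨hb₀, hc₀⟩ := hp₀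
  obtain ⟨lam₀, hlam₀pos, hroot₀⟩ := orlicz_exists_root hφ₁ hφ₂ hε hb₀ hc₀
  have hg₀ : g p₀ = lam₀ := orliczComb_eq_root hφ₁ hφ₂ hε hb₀ hc₀ hlam₀pos hroot₀
  rw [ContinuousAt, Metric.tendsto_nhds]
  intro δ hδ
  set δ' : ℝ := min δ (lam₀ / 2) with hδ'
  have hδ'pos : 0 < δ' := lt_min hδ (by linarith)
  have hδ'le : δ' ≤ δ := min_le_left _ _
  have hlo : 0 < lam₀ - δ' := by
    have : δ' ≤ lam₀/2 := min_le_right _ _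
    linarith
  have hhi : 0 < lam₀ + δ' := by linarith
  -- auxiliary continuous maps
  have hauxcont : ∀ μ : ℝ, 0 < μ →
      ContinuousAt (fun p : ℝ × ℝ => φ₁ (p.1 / μ) + ε * φ₂ (p.2 / μ)) p₀ := by
    intro μ hμ
    have h1 : ContinuousAt φ₁ (p₀.1 / μ) :=
      hφ₁.continuousOn.continuousAt (Ioi_mem_nhds (div_pos hb₀ hμ))
    have h2 : ContinuousAt φ₂ (p₀.2 / μ) :=
      hφ₂.continuousOn.continuousAt (Ioi_mem_nhds (div_pos hc₀ hμ))
    have hd1 : ContinuousAt (fun p : ℝ × ℝ => p.1 / μ) p₀ := continuousAt_fst.div_const μ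
    have hd2 : ContinuousAt (fun p : ℝ × ℝ => p.2 / μ) p₀ := continuousAt_snd.div_const μ
    exact ((ContinuousAt.comp (f := fun p : ℝ × ℝ => p.1 / μ) h1 hd1).add
      (continuousAt_const.mul (ContinuousAt.comp (f := fun p : ℝ × ℝ => p.2 / μ) h2 hd2)))
  have hmono₀ := orliczF_strictMono (φ₁ := φ₁) (φ₂ := φ₂) hφ₁ hφ₂ hε hb₀ hc₀
  have hAlt : φ₁ (p₀.1 / (lam₀ - δ')) + ε * φ₂ (p₀.2 / (lam₀ - δ')) < 1 := by
    have := hmono₀ (mem_Ioi.mpr hlo) (mem_Ioi.mpr hlam₀pos) (by linarith)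
    simp only at this; linarith [hroot₀]
  have hBgt : 1 < φ₁ (p₀.1 / (lam₀ + δ')) + ε * φ₂ (p₀.2 / (lam₀ + δ')) := by
    have := hmono₀ (mem_Ioi.mpr hlam₀pos) (mem_Ioi.mpr hhi) (by linarith)
    simp only at this; linarith [hroot₀]
  have hevA : ∀ᶠ p in nhds p₀, φ₁ (p.1 / (lam₀ - δ')) + ε * φ₂ (p.2 / (lam₀ - δ')) < 1 :=
    ((hauxcont _ hlo)).eventually_lt_const hAlt
  have hevB : ∀ᶠ p in nhds p₀, 1 < φ₁ (p.1 / (lam₀ + δ')) + ε * φ₂ (p.2 / (lam₀ + δ')) :=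
    ((hauxcont _ hhi)).eventually_const_lt hBgt
  have hevQ : ∀ᶠ p in nhds p₀, p ∈ Q := hQopen.mem_nhds ⟨hb₀, hc₀⟩
  filter_upwards [hevA, hevB, hevQ] with p hA hB hpQ
  obtain ⟨hb, hc⟩ := hpQ
  obtain ⟨lam, hlampos, hroot⟩ := orlicz_exists_root hφ₁ hφ₂ hε hb hc
  have hgp : g p = lam := orliczComb_eq_root hφ₁ hφ₂ hε hb hc hlampos hroot
  have hmono := orliczF_strictMono (φ₁ := φ₁) (φ₂ := φ₂) hφ₁ hφ₂ hε hb hc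
  -- lam₀ - δ' < lam
  have h1 : lam₀ - δ' < lam := by
    by_contra hle
    push_neg at hle
    rcases eq_or_lt_of_le hle with heq | hlt
    · rw [heq] at hroot; linarith
    · have := hmono (mem_Ioi.mpr hlampos) (mem_Ioi.mpr hlo) hlt
      simp only at this; linarith
  have h2 : lam < lam₀ + δ' := by
    by_contra hle
    push_neg at hle
    rcases eq_or_lt_of_le hle with heq | hlt
    · rw [← heq] at hroot; linarith
    · have := hmono (mem_Ioi.mpr hhi) (mem_Ioi.mpr hlampos) hlt
      simp only at this; linarith
  rw [hgp, hg₀, Real.dist_eq, abs_sub_lt_iff]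
  constructor <;> linarith
end core

set_option maxHeartbeats 1000000 in
/-- The half-width function `u ↦ b(K +_φ ε·L, u)` is positive and continuous on
the unit sphere. -/
theorem orliczComb_pos_continuousOn {n : ℕ} (hn : 2 ≤ n)
    (φ₁ φ₂ : ℝ → ℝ) (hφ₁ : IsOrliczPhi φ₁) (hφ₂ : IsOrliczPhi φ₂)
    (ε : ℝ) (hε : 0 < ε)
    (K L : Set (Euc n)) (hK : IsConvexBody K) (hL : IsConvexBody L) :
    (∀ u : Euc n, ‖u‖ = 1 →
        0 < orliczComb φ₁ φ₂ ε (halfWidth K u) (halfWidth L u)) ∧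
      ContinuousOn (fun u : Euc n => orliczComb φ₁ φ₂ ε (halfWidth K u) (halfWidth L u))
        (sphere (0 : Euc n) 1) := by
  obtain ⟨hKc, hKconv, hK0⟩ := hK
  obtain ⟨hLc, hLconv, hL0⟩ := hL
  constructor
  · intro u hu
    exact orliczComb_pos hφ₁ hφ₂ hε (halfWidth_pos hKc hK0 hu) (halfWidth_pos hLc hL0 hu)
  · have hbK : Continuous (halfWidth K) := continuous_halfWidth hKc ⟨0, interior_subset hK0⟩
    have hbL : Continuous (halfWidth L) := continuous_halfWidth hLc ⟨0, interior_subset hL0⟩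
    have hpair : Continuous (fun u : Euc n => (halfWidth K u, halfWidth L u)) :=
      hbK.prodMk hbL
    have hmaps : MapsTo (fun u : Euc n => (halfWidth K u, halfWidth L u))
        (sphere (0 : Euc n) 1) {p : ℝ × ℝ | 0 < p.1 ∧ 0 < p.2} := by
      intro u hu
      have hu' : ‖u‖ = 1 := by rwa [mem_sphere_zero_iff_norm] at hu
      exact ⟨halfWidth_pos hKc hK0 hu', halfWidth_pos hLc hL0 hu'⟩
    exact (orliczComb_continuousOn hφ₁ hφ₂ hε).comp hpair.continuousOn hmaps

end
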